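/- arXiv:1511.06082 — 2 statements merged into one kernel-verified Lean document; each statement's English description precedes it below -/
import Mathlib

section
/- For each ν ≥ 1/2, the function q_ν(x) = I_ν(x) K_ν(x) / (1 + |ln x|) is increasing on (0, 1]. -/
/-!
On `(0, 1]` we have `1 + |log x| = 1 - log x`, and the function factors as
`(x^{-ν} I_ν(x)) · (x^ν e^x K_ν(x)) · (e^{-x} / (1 - log x))`, a product of three nonnegative
increasing functions. The first is, up to the constant `2^{-ν}`, a power series in `(x/2)²`
with positive coefficients. For the second, differentiating and integrating by parts under
`K_ν(x) = ∫₀^∞ e^{-x cosh t} cosh (ν t) dt` gives `2 K_ν' = -(K_{ν-1} + K_{ν+1})` and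
`K_{ν+1} - K_{ν-1} = (2ν/x) K_ν`, so its derivative is `x^ν e^x (K_ν - K_{ν-1})`, which is
nonnegative because `K_μ` increases with `|μ|` and `|ν - 1| ≤ ν`. The derivative of the third
has the sign of `log x - (1 - 1/x) ≥ 0`.
-/

open Real MeasureTheory Set Filter

/-- Modified Bessel function of the first kind `I_ν`. -/
noncomputable def besselI (ν x : ℝ) : ℝ :=
  ∑' n : ℕ, (x / 2) ^ (2 * (n : ℝ) + ν) / ((n.factorial : ℝ) * Real.Gamma ((n : ℝ) + ν + 1))

/-- Modified Bessel function of the second kind `K_ν`. -/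
noncomputable def besselK (ν x : ℝ) : ℝ :=
  ∫ t in Ioi (0 : ℝ), Real.exp (-x * Real.cosh t) * Real.cosh (ν * t)

/-- Bessel function of the first kind `J_ν`. -/
noncomputable def besselJ (ν x : ℝ) : ℝ :=
  ∑' n : ℕ, (-1 : ℝ) ^ n * (x / 2) ^ (2 * (n : ℝ) + ν) /
    ((n.factorial : ℝ) * Real.Gamma ((n : ℝ) + ν + 1))

/-- Modified Struve function of the first kind `L_ν`. -/
noncomputable def struveL (ν x : ℝ) : ℝ :=
  ∑' n : ℕ, (x / 2) ^ (2 * (n : ℝ) + ν + 1) /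
    (Real.Gamma ((n : ℝ) + 3 / 2) * Real.Gamma ((n : ℝ) + ν + 3 / 2))

/-- Airy function `Ai`. -/
noncomputable def airyAi (t : ℝ) : ℝ :=
  (1 / Real.pi) * ∫ s in Ioi (0 : ℝ), Real.cos (s ^ 3 / 3 + s * t)

/-- Landau constant `b_L = 2^{1/3} ⬝ sup_{t ≥ 0} Ai(t)`. -/
noncomputable def landau_bL : ℝ :=
  (2 : ℝ) ^ ((1 : ℝ) / 3) * sSup (airyAi '' Ici 0)

/-- Landau constant `c_L = sup_{t ≥ 0} t^{1/3} J₀(t)`. -/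
noncomputable def landau_cL : ℝ :=
  sSup ((fun t : ℝ => t ^ ((1 : ℝ) / 3) * besselJ 0 t) '' Ici 0)

lemma sq_div_four_le_cosh (t : ℝ) : t ^ 2 / 4 ≤ cosh t := by
  have h := quadratic_le_exp_of_nonneg (abs_nonneg t)
  rw [← cosh_abs, cosh_eq]
  nlinarith [exp_pos (-|t|), sq_abs t, abs_nonneg t]

lemma cosh_le_exp_abs (y : ℝ) : cosh y ≤ exp |y| := by
  rw [← cosh_abs, cosh_eq]
  nlinarith [exp_le_exp.2 (neg_le_self (abs_nonneg y))]

lemma abs_sinh_le_cosh (y : ℝ) : |sinh y| ≤ cosh y := by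
  rw [abs_sinh, ← cosh_abs]
  exact (sinh_lt_cosh _).le

section besselK

variable {x : ℝ}

lemma exp_neg_mul_cosh_mul_cosh_le (μ : ℝ) (hx : 0 < x) (t : ℝ) :
    exp (-x * cosh t) * cosh (μ * t) ≤ exp (2 * μ ^ 2 / x) * exp (-(x / 8) * t ^ 2) := by
  have amgm : |μ| * |t| ≤ 2 * μ ^ 2 / x + x / 8 * t ^ 2 := by
    rw [div_add' _ _ _ hx.ne', le_div_iff₀ hx, ← sq_abs t, ← sq_abs μ]
    nlinarith [sq_nonneg (x * |t| / 4 - |μ|)]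
  calc exp (-x * cosh t) * cosh (μ * t) ≤ exp (-x * cosh t) * exp (|μ| * |t|) := by
        gcongr
        rw [← abs_mul]
        exact cosh_le_exp_abs _
    _ ≤ exp (2 * μ ^ 2 / x) * exp (-(x / 8) * t ^ 2) := by
        rw [← exp_add, ← exp_add, exp_le_exp]
        nlinarith [sq_div_four_le_cosh t]

lemma integrable_exp_neg_mul_cosh_mul_cosh (μ : ℝ) (hx : 0 < x) :
    Integrable fun t => exp (-x * cosh t) * cosh (μ * t) :=
  ((integrable_exp_neg_mul_sq (by positivity : 0 < x / 8)).const_mul _).mono' (by fun_prop)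
    (ae_of_all _ fun t => by
      rw [Real.norm_of_nonneg (by positivity)]
      exact exp_neg_mul_cosh_mul_cosh_le μ hx t)

lemma besselK_nonneg (ν x : ℝ) : 0 ≤ besselK ν x :=
  setIntegral_nonneg measurableSet_Ioi fun _ _ => by positivity

lemma besselK_le_besselK {μ ν : ℝ} (h : |μ| ≤ |ν|) (hx : 0 < x) :
    besselK μ x ≤ besselK ν x := by
  refine setIntegral_mono (integrable_exp_neg_mul_cosh_mul_cosh μ hx).integrableOn
    (integrable_exp_neg_mul_cosh_mul_cosh ν hx).integrableOn fun t => ?_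
  gcongr exp _ * ?_
  rw [cosh_le_cosh, abs_mul, abs_mul]
  gcongr

theorem hasDerivAt_besselK (ν : ℝ) (hx : 0 < x) :
    HasDerivAt (besselK ν) (-(besselK (ν - 1) x + besselK (ν + 1) x) / 2) x := by
  set k : ℝ → ℝ → ℝ → ℝ := fun μ y t => exp (-y * cosh t) * cosh (μ * t)
  have hk : ∀ μ {y : ℝ}, 0 < y → IntegrableOn (k μ y) (Ioi 0) := fun μ _ hy =>
    (integrable_exp_neg_mul_cosh_mul_cosh μ hy).integrableOn
  have hderiv : ∀ t y, HasDerivAt (k ν · t) (-(k (ν - 1) y t + k (ν + 1) y t) / 2) y := by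
    intro t y
    refine ((((hasDerivAt_neg y).mul_const (cosh t)).exp).mul_const (cosh (ν * t))).congr_deriv ?_
    simp only [k, sub_mul, add_mul, one_mul, cosh_sub, cosh_add]
    ring
  have hbound : ∀ t, ∀ y ∈ Ioi (x / 2),
      ‖-(k (ν - 1) y t + k (ν + 1) y t) / 2‖ ≤
        (k (ν - 1) (x / 2) t + k (ν + 1) (x / 2) t) / 2 := by
    intro t y hy
    rw [norm_div, norm_neg, Real.norm_of_nonneg (by positivity), Real.norm_two]
    simp only [k]
    gcongr <;> nlinarith [cosh_pos t, mem_Ioi.1 hy]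
  have h := hasDerivAt_integral_of_dominated_loc_of_deriv_le (μ := volume.restrict (Ioi 0))
    (Ioi_mem_nhds (half_lt_self hx)) (F := fun y t => k ν y t) (.of_forall fun _ => by fun_prop)
    (hk ν hx) (by fun_prop) (.of_forall hbound)
    (((hk _ (half_pos hx)).add (hk _ (half_pos hx))).div_const 2)
    (.of_forall fun t y _ => hderiv t y)
  have hint : ∫ t in Ioi 0, -(k (ν - 1) x t + k (ν + 1) x t) / 2 =
      -(besselK (ν - 1) x + besselK (ν + 1) x) / 2 := by
    rw [integral_div, integral_neg, integral_add (hk _ hx) (hk _ hx)]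
    rfl
  exact hint ▸ h.2

theorem besselK_add_one_sub_besselK_sub_one (ν : ℝ) (hx : 0 < x) :
    besselK (ν + 1) x - besselK (ν - 1) x = 2 * ν / x * besselK ν x := by
  set k : ℝ → ℝ → ℝ := fun μ t => exp (-x * cosh t) * cosh (μ * t)
  have hk : ∀ μ, IntegrableOn (k μ) (Ioi 0) := fun μ =>
    (integrable_exp_neg_mul_cosh_mul_cosh μ hx).integrableOn
  set f : ℝ → ℝ := fun t => exp (-x * cosh t) * sinh (ν * t)
  have hf : ∀ t, HasDerivAt f (ν * k ν t - x / 2 * (k (ν + 1) t - k (ν - 1) t)) t := by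
    intro t
    refine ((((hasDerivAt_cosh t).const_mul (-x)).exp).mul
      (((hasDerivAt_id t).const_mul ν).sinh)).congr_deriv ?_
    simp only [k, add_mul, sub_mul, one_mul, cosh_sub, cosh_add, id, mul_one]
    ring
  have hf'int :
      IntegrableOn (fun t => ν * k ν t - x / 2 * (k (ν + 1) t - k (ν - 1) t)) (Ioi 0) :=
    ((hk ν).const_mul ν).sub (((hk _).sub (hk _)).const_mul _)
  have hfint : IntegrableOn f (Ioi 0) :=
    (hk ν).mono' (by fun_prop) (.of_forall fun t => by
      rw [norm_mul, Real.norm_of_nonneg (exp_pos _).le, Real.norm_eq_abs]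
      exact mul_le_mul_of_nonneg_left (abs_sinh_le_cosh _) (exp_pos _).le)
  have h := integral_Ioi_of_hasDerivAt_of_tendsto' (fun t _ => hf t) hf'int
    (tendsto_zero_of_hasDerivAt_of_integrableOn_Ioi (fun t _ => hf t) hf'int hfint)
  rw [integral_sub (g := fun t => x / 2 * (k (ν + 1) t - k (ν - 1) t)) ((hk ν).const_mul ν)
    (((hk _).sub (hk _)).const_mul _), integral_const_mul,
    integral_const_mul, integral_sub (hk _) (hk _)] at h
  simp only [f, mul_zero, sinh_zero, sub_zero] at h
  change ν * besselK ν x - x / 2 * (besselK (ν + 1) x - besselK (ν - 1) x) = 0 at h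
  field_simp
  linarith

theorem hasDerivAt_rpow_mul_exp_mul_besselK (ν : ℝ) (hx : 0 < x) :
    HasDerivAt (fun y => y ^ ν * exp y * besselK ν y)
      (x ^ ν * exp x * (besselK ν x - besselK (ν - 1) x)) x := by
  have hrec : besselK (ν + 1) x = besselK (ν - 1) x + 2 * ν / x * besselK ν x := by
    linarith [besselK_add_one_sub_besselK_sub_one ν hx]
  refine (((hasDerivAt_rpow_const (Or.inl hx.ne')).mul (hasDerivAt_exp x)).mul
    (hasDerivAt_besselK ν hx)).congr_deriv ?_
  rw [rpow_sub_one hx.ne', hrec]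
  simp only [Pi.mul_apply]
  field_simp
  ring

theorem monotoneOn_rpow_mul_exp_mul_besselK {ν : ℝ} (hν : 1 / 2 ≤ ν) :
    MonotoneOn (fun x => x ^ ν * exp x * besselK ν x) (Ioi 0) := by
  refine monotoneOn_of_hasDerivWithinAt_nonneg (convex_Ioi 0)
    (fun x hx => (hasDerivAt_rpow_mul_exp_mul_besselK ν hx).continuousAt.continuousWithinAt)
    (fun x hx => (hasDerivAt_rpow_mul_exp_mul_besselK ν (interior_subset hx)).hasDerivWithinAt)
    fun x hx => ?_
  rw [interior_Ioi] at hx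
  have horder : |ν - 1| ≤ |ν| := by
    rw [abs_of_nonneg (by linarith : 0 ≤ ν)]
    exact abs_le.2 ⟨by linarith, by linarith⟩
  have hK := besselK_le_besselK horder hx
  have := rpow_nonneg hx.le ν
  have := sub_nonneg.2 hK
  positivity

end besselK

section besselI

open Nat

noncomputable def besselISeries (ν z : ℝ) : ℝ :=
  ∑' n : ℕ, z ^ n / (n ! * Gamma (n + ν + 1))

lemma summable_besselISeries (ν z : ℝ) :
    Summable fun n : ℕ => z ^ n / (n ! * Gamma (n + ν + 1)) := by
  refine .of_norm_bounded_eventually_nat (Real.summable_pow_div_factorial |z|) ?_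
  filter_upwards [(tendsto_natCast_atTop_atTop (R := ℝ)).eventually_ge_atTop (1 - ν)] with n hn
  have hΓ : Gamma 2 ≤ Gamma (n + ν + 1) :=
    Gamma_strictMonoOn_Ici.monotoneOn (mem_Ici.2 le_rfl) (mem_Ici.2 (by linarith)) (by linarith)
  rw [Gamma_two] at hΓ
  rw [Real.norm_eq_abs, abs_div, abs_pow,
    abs_of_pos (mul_pos (by positivity) (by linarith : (0 : ℝ) < Gamma (n + ν + 1)))]
  gcongr
  exact le_mul_of_one_le_right (by positivity) hΓ

lemma besselI_div_rpow_eq (ν : ℝ) {x : ℝ} (hx : 0 < x) :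
    besselI ν x / x ^ ν = besselISeries ν ((x / 2) ^ 2) / 2 ^ ν := by
  have hseries : besselI ν x = (x / 2) ^ ν * besselISeries ν ((x / 2) ^ 2) := by
    rw [besselI, besselISeries, ← tsum_mul_left]
    congr 1 with n
    rw [rpow_add (by positivity), rpow_mul_natCast (by positivity), rpow_two]
    ring
  rw [hseries, div_rpow hx.le zero_le_two]
  field_simp

variable {ν : ℝ} (hν : -1 < ν)
include hν

lemma factorial_mul_Gamma_pos (n : ℕ) : 0 < (n ! : ℝ) * Gamma (n + ν + 1) :=
  mul_pos (by positivity) (Gamma_pos_of_pos (by linarith [n.cast_nonneg (α := ℝ)]))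

lemma besselI_nonneg {x : ℝ} (hx : 0 ≤ x) : 0 ≤ besselI ν x :=
  tsum_nonneg fun n => div_nonneg (by positivity) (factorial_mul_Gamma_pos hν n).le

lemma monotoneOn_besselISeries : MonotoneOn (besselISeries ν) (Ici 0) :=
  fun z hz w _ hzw => Summable.tsum_le_tsum
    (fun n => div_le_div_of_nonneg_right (pow_le_pow_left₀ hz hzw n)
      (factorial_mul_Gamma_pos hν n).le)
    (summable_besselISeries ν z) (summable_besselISeries ν w)

lemma monotoneOn_besselI_div_rpow :
    MonotoneOn (fun x => besselI ν x / x ^ ν) (Ioi 0) := by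
  intro x hx y hy hxy
  simp only [besselI_div_rpow_eq ν hx, besselI_div_rpow_eq ν hy]
  gcongr ?_ / _
  exact monotoneOn_besselISeries hν (sq_nonneg (x / 2)) (sq_nonneg (y / 2))
    (by have := hx.out; gcongr)

end besselI

lemma hasDerivAt_exp_neg_div_one_sub_log {x : ℝ} (hx : 0 < x) (hlog : log x ≠ 1) :
    HasDerivAt (fun y => exp (-y) / (1 - log y))
      (exp (-x) * (log x - (1 - x⁻¹)) / (1 - log x) ^ 2) x := by
  refine ((hasDerivAt_neg x).exp.div ((hasDerivAt_log hx.ne').const_sub 1)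
    (sub_ne_zero.2 hlog.symm)).congr_deriv ?_
  ring

lemma monotoneOn_exp_neg_div_one_sub_log :
    MonotoneOn (fun x => exp (-x) / (1 - log x)) (Ioo 0 (exp 1)) := by
  have hlog : ∀ x ∈ Ioo 0 (exp 1), log x < 1 := fun x hx => (log_lt_iff_lt_exp hx.1).2 hx.2
  have hderiv : ∀ x ∈ Ioo 0 (exp 1), HasDerivAt (fun y => exp (-y) / (1 - log y))
      (exp (-x) * (log x - (1 - x⁻¹)) / (1 - log x) ^ 2) x := fun x hx =>
    hasDerivAt_exp_neg_div_one_sub_log hx.1 (hlog x hx).ne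
  refine monotoneOn_of_hasDerivWithinAt_nonneg (convex_Ioo 0 (exp 1))
    (fun x hx => (hderiv x hx).continuousAt.continuousWithinAt)
    (fun x hx => (hderiv x (interior_subset hx)).hasDerivWithinAt) fun x hx => ?_
  rw [interior_Ioo] at hx
  have := sub_nonneg.2 (one_sub_inv_le_log_of_pos hx.1)
  positivity

theorem stmt11 (ν : ℝ) (hν : 1 / 2 ≤ ν) :
    MonotoneOn (fun x : ℝ => besselI ν x * besselK ν x / (1 + |Real.log x|)) (Ioc 0 1) := by
  have hIoi : Ioc (0 : ℝ) 1 ⊆ Ioi 0 := Ioc_subset_Ioi_self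
  have hIoo : Ioc (0 : ℝ) 1 ⊆ Ioo 0 (exp 1) :=
    fun x hx => ⟨hx.1, hx.2.trans_lt (one_lt_exp_iff.2 one_pos)⟩
  have hI := (monotoneOn_besselI_div_rpow (by linarith)).mono hIoi
  have hK := (monotoneOn_rpow_mul_exp_mul_besselK hν).mono hIoi
  have hL := monotoneOn_exp_neg_div_one_sub_log.mono hIoo
  have hI₀ : ∀ x ∈ Ioc (0 : ℝ) 1, 0 ≤ besselI ν x / x ^ ν := fun x hx =>
    div_nonneg (besselI_nonneg (by linarith) hx.1.le) (by positivity [hx.1])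
  have hK₀ : ∀ x ∈ Ioc (0 : ℝ) 1, 0 ≤ x ^ ν * exp x * besselK ν x := fun x hx =>
    mul_nonneg (by positivity [hx.1]) (besselK_nonneg ν x)
  refine ((hI.mul hK hI₀ hK₀).mul hL (fun x hx => mul_nonneg (hI₀ x hx) (hK₀ x hx))
    fun x hx => ?_).congr fun x hx => ?_
  · exact div_nonneg (exp_pos _).le (by linarith [log_nonpos hx.1.le hx.2])
  · have hlog := log_nonpos hx.1.le hx.2
    have h1 : 1 - log x ≠ 0 := by linarith
    have h2 : x ^ ν ≠ 0 := (rpow_pos_of_pos hx.1 ν).ne'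
    simp only [Pi.mul_apply]
    rw [abs_of_nonpos hlog, exp_neg, ← sub_eq_add_neg]
    field_simp
end

section
/- For all ν > 1/2 and x > 0, the Turán type inequality P_ν²(x) - P_{ν-1}(x) P_{ν+1}(x) < P_ν²(x) / (ν + 1/2) holds, where P_ν(x) = I_ν(x) K_ν(x). -/
/-!
Both factors of `P_ν = I_ν K_ν` satisfy a Turán-type inequality proved by Cauchy–Schwarz.
For `I_ν`, the power series coefficients `c_ν(n) = q^n / (n! Γ(n + ν + 1))` satisfy
`ν c_ν(n)² ≤ (ν + 1) c_{ν-1}(n) c_{ν+1}(n)`, because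
`c_{ν-1}(n) c_{ν+1}(n) / c_ν(n)² = (n + ν) / (n + ν + 1) ≥ ν / (ν + 1)`;
summing gives `ν I_ν² ≤ (ν + 1) I_{ν-1} I_{ν+1}`. For `K_ν`, the integrand obeys
`cosh (ν t)² ≤ cosh ((ν - 1) t) cosh ((ν + 1) t)`, so `K_ν² ≤ K_{ν-1} K_{ν+1}`.
Multiplying, `ν P_ν² ≤ (ν + 1) P_{ν-1} P_{ν+1}`, i.e.
`P_ν² - P_{ν-1} P_{ν+1} ≤ P_ν² / (ν + 1) < P_ν² / (ν + 1/2)`.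
Both Cauchy–Schwarz inequalities come from the discriminant of the nonnegative quadratic
`t ↦ ∑ (f t² - 2 r t + g)` (resp. its integral).
-/

open Real MeasureTheory Set Filter

lemma quadratic_nonneg_of_sq_le_mul {r f g : ℝ} (hf : 0 ≤ f) (hg : 0 ≤ g) (h : r ^ 2 ≤ f * g)
    (t : ℝ) : 0 ≤ f * (t * t) + -2 * r * t + g := by
  rcases hf.eq_or_lt with rfl | hf
  · have hr : r = 0 := by nlinarith [sq_nonneg r]
    simpa [hr] using hg
  · refine (mul_nonneg_iff_of_pos_left hf).1 ?_
    nlinarith [sq_nonneg (f * t - r)]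

theorem tsum_sq_le_tsum_mul_tsum_of_sq_le_mul {ι : Type*} {r f g : ι → ℝ}
    (hf : ∀ i, 0 ≤ f i) (hg : ∀ i, 0 ≤ g i) (h : ∀ i, r i ^ 2 ≤ f i * g i)
    (hr : Summable r) (hfs : Summable f) (hgs : Summable g) :
    (∑' i, r i) ^ 2 ≤ (∑' i, f i) * ∑' i, g i := by
  have hquad : ∀ t, 0 ≤ (∑' i, f i) * (t * t) + -2 * (∑' i, r i) * t + ∑' i, g i := fun t =>
    (((hfs.hasSum.mul_right (t * t)).add ((hr.hasSum.mul_left (-2)).mul_right t)).add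
      hgs.hasSum).nonneg fun i => quadratic_nonneg_of_sq_le_mul (hf i) (hg i) (h i) t
  have := discrim_le_zero hquad
  rw [discrim] at this
  linarith

theorem integral_sq_le_integral_mul_integral_of_sq_le_mul {α : Type*} [MeasurableSpace α]
    {μ : Measure α} {r f g : α → ℝ} (hf : 0 ≤ᵐ[μ] f) (hg : 0 ≤ᵐ[μ] g)
    (h : ∀ᵐ a ∂μ, r a ^ 2 ≤ f a * g a)
    (hr : Integrable r μ) (hfi : Integrable f μ) (hgi : Integrable g μ) :
    (∫ a, r a ∂μ) ^ 2 ≤ (∫ a, f a ∂μ) * ∫ a, g a ∂μ := by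
  have hquad : ∀ t, 0 ≤ (∫ a, f a ∂μ) * (t * t) + -2 * (∫ a, r a ∂μ) * t + ∫ a, g a ∂μ := by
    intro t
    have hint : 0 ≤ ∫ a, (f a * (t * t) + -2 * r a * t + g a) ∂μ := by
      refine integral_nonneg_of_ae ?_
      filter_upwards [hf, hg, h] with a hfa hga ha
      exact quadratic_nonneg_of_sq_le_mul hfa hga ha t
    rwa [integral_add (by fun_prop) hgi, integral_add (by fun_prop) (by fun_prop),
      integral_mul_const, integral_mul_const, integral_const_mul] at hint
  have := discrim_le_zero hquad
  rw [discrim] at this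
  linarith

open Nat in
noncomputable def besselICoeff (ν q : ℝ) (n : ℕ) : ℝ :=
  q ^ n / (n ! * Gamma (n + ν + 1))

lemma besselI_eq_rpow_mul_tsum (ν : ℝ) {x : ℝ} (hx : 0 < x) :
    besselI ν x = (x / 2) ^ ν * ∑' n, besselICoeff ν ((x / 2) ^ 2) n := by
  rw [besselI, ← tsum_mul_left]
  congr 1 with n
  rw [besselICoeff, rpow_add (by positivity), rpow_mul_natCast (by positivity), rpow_two]
  ring

lemma besselICoeff_pos {ν q : ℝ} (hν : -1 < ν) (hq : 0 < q) (n : ℕ) :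
    0 < besselICoeff ν q n := by
  have := Gamma_pos_of_pos (show 0 < (n : ℝ) + ν + 1 by linarith [n.cast_nonneg (α := ℝ)])
  unfold besselICoeff
  positivity

lemma besselICoeff_add_one {ν q : ℝ} {n : ℕ} (h : (n : ℝ) + ν + 1 ≠ 0) :
    besselICoeff (ν + 1) q n = besselICoeff ν q n / (n + ν + 1) := by
  rw [besselICoeff, besselICoeff, ← add_assoc, Gamma_add_one h]
  field_simp

lemma besselICoeff_succ {ν q : ℝ} (n : ℕ) (h : (n : ℝ) + ν + 1 ≠ 0) :
    besselICoeff ν q (n + 1) = q / ((n + 1) * (n + ν + 1)) * besselICoeff ν q n := by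
  rw [besselICoeff, besselICoeff, Nat.cast_succ, add_right_comm _ 1, Gamma_add_one h,
    Nat.factorial_succ, pow_succ]
  push_cast
  field_simp

lemma summable_besselICoeff {ν q : ℝ} (hν : -1 < ν) (hq : 0 < q) :
    Summable (besselICoeff ν q) := by
  have hpos := besselICoeff_pos hν hq
  refine summable_of_ratio_test_tendsto_lt_one zero_lt_one
    (.of_forall fun n => (hpos n).ne') ?_
  have hratio : ∀ n : ℕ, ‖besselICoeff ν q (n + 1)‖ / ‖besselICoeff ν q n‖ =
      q / ((n + 1) * (n + ν + 1)) := fun n => by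
    rw [norm_of_nonneg (hpos _).le, norm_of_nonneg (hpos _).le,
      besselICoeff_succ n (by linarith [n.cast_nonneg (α := ℝ)]),
      mul_div_cancel_right₀ _ (hpos n).ne']
  simp only [hratio]
  have hn := tendsto_natCast_atTop_atTop (R := ℝ)
  exact tendsto_const_nhds.div_atTop ((tendsto_atTop_add_const_right _ 1 hn).atTop_mul_atTop₀
    (tendsto_atTop_add_const_right _ 1 (tendsto_atTop_add_const_right _ ν hn)))

lemma besselI_pos {ν x : ℝ} (hν : -1 < ν) (hx : 0 < x) : 0 < besselI ν x := by
  have hq : 0 < (x / 2) ^ 2 := by positivity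
  rw [besselI_eq_rpow_mul_tsum ν hx]
  exact mul_pos (rpow_pos_of_pos (by positivity) ν) ((summable_besselICoeff hν hq).tsum_pos
    (fun n => (besselICoeff_pos hν hq n).le) 0 (besselICoeff_pos hν hq 0))

lemma mul_besselICoeff_sq_le {ν : ℝ} (hν : 0 < ν) (q : ℝ) (n : ℕ) :
    ν * besselICoeff ν q n ^ 2 ≤
      (ν + 1) * (besselICoeff (ν - 1) q n * besselICoeff (ν + 1) q n) := by
  have hn : (0 : ℝ) ≤ n := n.cast_nonneg
  have hshift := besselICoeff_add_one (ν := ν - 1) (q := q) (n := n) (by linarith)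
  rw [sub_add_cancel, show (n : ℝ) + (ν - 1) + 1 = n + ν by ring] at hshift
  rw [besselICoeff_add_one (by linarith), hshift, ← sub_nonneg]
  have : (ν + 1) * (besselICoeff (ν - 1) q n *
        (besselICoeff (ν - 1) q n / (n + ν) / (n + ν + 1))) -
      ν * (besselICoeff (ν - 1) q n / (n + ν)) ^ 2 =
      n * besselICoeff (ν - 1) q n ^ 2 / ((n + ν) ^ 2 * (n + ν + 1)) := by
    field_simp
    ring
  rw [this]
  positivity

lemma mul_tsum_besselICoeff_sq_le {ν q : ℝ} (hν : 0 < ν) (hq : 0 < q) :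
    ν * (∑' n, besselICoeff ν q n) ^ 2 ≤
      (ν + 1) * ((∑' n, besselICoeff (ν - 1) q n) * ∑' n, besselICoeff (ν + 1) q n) := by
  have hCS := tsum_sq_le_tsum_mul_tsum_of_sq_le_mul
    (r := besselICoeff ν q) (f := fun n => (ν + 1) / ν * besselICoeff (ν - 1) q n)
    (g := besselICoeff (ν + 1) q)
    (fun n => by have := besselICoeff_pos (ν := ν - 1) (by linarith) hq n; positivity)
    (fun n => (besselICoeff_pos (by linarith) hq n).le)
    (fun n => by
      rw [mul_assoc, div_mul_eq_mul_div, le_div_iff₀ hν]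
      linarith [mul_besselICoeff_sq_le hν q n])
    (summable_besselICoeff (by linarith) hq)
    ((summable_besselICoeff (by linarith) hq).mul_left _)
    (summable_besselICoeff (by linarith) hq)
  rw [tsum_mul_left] at hCS
  calc ν * (∑' n, besselICoeff ν q n) ^ 2
      ≤ ν * ((ν + 1) / ν * (∑' n, besselICoeff (ν - 1) q n) * ∑' n, besselICoeff (ν + 1) q n) :=
        by gcongr
    _ = _ := by field_simp

theorem turan_besselI {ν x : ℝ} (hν : 0 < ν) (hx : 0 < x) :
    ν * besselI ν x ^ 2 ≤ (ν + 1) * (besselI (ν - 1) x * besselI (ν + 1) x) := by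
  have hpow : (x / 2) ^ (ν - 1) * (x / 2) ^ (ν + 1) = ((x / 2) ^ ν) ^ 2 := by
    rw [← rpow_add (by positivity), ← rpow_mul_natCast (by positivity)]
    ring_nf
  rw [besselI_eq_rpow_mul_tsum ν hx, besselI_eq_rpow_mul_tsum (ν - 1) hx,
    besselI_eq_rpow_mul_tsum (ν + 1) hx]
  calc ν * ((x / 2) ^ ν * ∑' n, besselICoeff ν ((x / 2) ^ 2) n) ^ 2
      = ((x / 2) ^ ν) ^ 2 * (ν * (∑' n, besselICoeff ν ((x / 2) ^ 2) n) ^ 2) := by ring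
    _ ≤ ((x / 2) ^ ν) ^ 2 * ((ν + 1) * ((∑' n, besselICoeff (ν - 1) ((x / 2) ^ 2) n) *
          ∑' n, besselICoeff (ν + 1) ((x / 2) ^ 2) n)) := by
        gcongr ?_ * ?_
        exact mul_tsum_besselICoeff_sq_le hν (by positivity)
    _ = _ := by rw [← hpow]; ring

noncomputable def besselKIntegrand (ν x t : ℝ) : ℝ := exp (-x * cosh t) * cosh (ν * t)

lemma besselK_eq_integral (ν x : ℝ) :
    besselK ν x = ∫ t in Ioi 0, besselKIntegrand ν x t := rfl

lemma besselKIntegrand_pos (ν x t : ℝ) : 0 < besselKIntegrand ν x t :=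
  mul_pos (exp_pos _) (cosh_pos _)

lemma besselKIntegrand_le_exp_neg {ν x t : ℝ} (hx : 0 < x) (ht₀ : 0 ≤ t)
    (ht : 4 * (|ν| + 1) / x ≤ t) : besselKIntegrand ν x t ≤ exp (-t) := by
  have hcosh : t ^ 2 / 4 ≤ cosh t := by
    rw [cosh_eq]
    nlinarith [quadratic_le_exp_of_nonneg ht₀, exp_pos (-t)]
  have hlin : (|ν| + 1) * t ≤ x * cosh t := by
    rw [div_le_iff₀ hx] at ht
    nlinarith
  calc besselKIntegrand ν x t ≤ exp (-x * cosh t) * exp (|ν| * t) := by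
        unfold besselKIntegrand
        gcongr
        calc cosh (ν * t) ≤ exp |ν * t| := cosh_le_exp_abs _
          _ = exp (|ν| * t) := by rw [abs_mul, abs_of_nonneg ht₀]
    _ = exp (|ν| * t - x * cosh t) := by rw [← exp_add]; ring_nf
    _ ≤ exp (-t) := exp_le_exp.2 (by linarith)

lemma integrableOn_besselKIntegrand (ν : ℝ) {x : ℝ} (hx : 0 < x) :
    IntegrableOn (besselKIntegrand ν x) (Ioi 0) := by
  refine integrable_of_isBigO_exp_neg one_pos (by unfold besselKIntegrand; fun_prop) ?_
  refine Asymptotics.IsBigO.of_bound 1 ?_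
  filter_upwards [eventually_ge_atTop 0, eventually_ge_atTop (4 * (|ν| + 1) / x)] with t ht₀ ht
  rw [norm_of_nonneg (besselKIntegrand_pos ν x t).le, norm_of_nonneg (exp_pos _).le, neg_one_mul,
    one_mul]
  exact besselKIntegrand_le_exp_neg hx ht₀ ht

lemma besselK_pos (ν : ℝ) {x : ℝ} (hx : 0 < x) : 0 < besselK ν x := by
  rw [besselK_eq_integral, setIntegral_pos_iff_support_of_nonneg_ae
    (.of_forall fun t => (besselKIntegrand_pos ν x t).le) (integrableOn_besselKIntegrand ν hx),
    Function.support_eq_univ fun t => (besselKIntegrand_pos ν x t).ne', univ_inter]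
  simp

lemma cosh_sub_mul_cosh_add (a t : ℝ) :
    cosh (a - t) * cosh (a + t) = cosh a ^ 2 + sinh t ^ 2 := by
  rw [cosh_sub, cosh_add]
  linear_combination cosh a ^ 2 * cosh_sq_sub_sinh_sq t + sinh t ^ 2 * cosh_sq_sub_sinh_sq a

lemma besselKIntegrand_sq_le (ν x t : ℝ) :
    besselKIntegrand ν x t ^ 2 ≤ besselKIntegrand (ν - 1) x t * besselKIntegrand (ν + 1) x t := by
  have hcosh : cosh (ν * t) ^ 2 ≤ cosh ((ν - 1) * t) * cosh ((ν + 1) * t) := by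
    rw [sub_mul, add_mul, one_mul, cosh_sub_mul_cosh_add]
    nlinarith [sq_nonneg (sinh t)]
  calc besselKIntegrand ν x t ^ 2 = exp (-x * cosh t) ^ 2 * cosh (ν * t) ^ 2 := mul_pow ..
    _ ≤ exp (-x * cosh t) ^ 2 * (cosh ((ν - 1) * t) * cosh ((ν + 1) * t)) := by gcongr
    _ = _ := by unfold besselKIntegrand; ring

theorem turan_besselK (ν : ℝ) {x : ℝ} (hx : 0 < x) :
    besselK ν x ^ 2 ≤ besselK (ν - 1) x * besselK (ν + 1) x :=
  integral_sq_le_integral_mul_integral_of_sq_le_mul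
    (.of_forall fun t => (besselKIntegrand_pos _ x t).le)
    (.of_forall fun t => (besselKIntegrand_pos _ x t).le)
    (.of_forall fun t => besselKIntegrand_sq_le ν x t) (integrableOn_besselKIntegrand ν hx)
    (integrableOn_besselKIntegrand _ hx) (integrableOn_besselKIntegrand _ hx)

theorem turan_besselI_mul_besselK {ν x : ℝ} (hν : 0 < ν) (hx : 0 < x) :
    ν * (besselI ν x * besselK ν x) ^ 2 ≤
      (ν + 1) * ((besselI (ν - 1) x * besselK (ν - 1) x) *
        (besselI (ν + 1) x * besselK (ν + 1) x)) := by
  have hI := turan_besselI hν hx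
  have hI₀ : 0 ≤ (ν + 1) * (besselI (ν - 1) x * besselI (ν + 1) x) :=
    le_trans (by positivity) hI
  calc ν * (besselI ν x * besselK ν x) ^ 2 = ν * besselI ν x ^ 2 * besselK ν x ^ 2 := by ring
    _ ≤ (ν + 1) * (besselI (ν - 1) x * besselI (ν + 1) x) * besselK ν x ^ 2 := by gcongr
    _ ≤ (ν + 1) * (besselI (ν - 1) x * besselI (ν + 1) x) *
        (besselK (ν - 1) x * besselK (ν + 1) x) := by gcongr; exact turan_besselK ν hx
    _ = _ := by ring

theorem stmt15 (ν x : ℝ) (hν : 1 / 2 < ν) (hx : 0 < x) :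
    (besselI ν x * besselK ν x) ^ 2 -
        (besselI (ν - 1) x * besselK (ν - 1) x) * (besselI (ν + 1) x * besselK (ν + 1) x) <
      (besselI ν x * besselK ν x) ^ 2 / (ν + 1 / 2) := by
  have hP : 0 < besselI ν x * besselK ν x :=
    mul_pos (besselI_pos (by linarith) hx) (besselK_pos ν hx)
  have hturan := turan_besselI_mul_besselK (show 0 < ν by linarith) hx
  calc _ ≤ (besselI ν x * besselK ν x) ^ 2 / (ν + 1) := by
        rw [le_div_iff₀ (by linarith)]
        linarith
    _ < _ := div_lt_div_of_pos_left (by positivity) (by linarith) (by linarith)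
end
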